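/- arXiv:math/0507098 — 4 statements merged into one kernel-verified Lean document; each statement's English description precedes it below -/
import Mathlib

section
/- Let V be a finite-dimensional nonzero complex normed vector space, q ∈ ℂ with 0 < |q| < 1, d ≥ 1, A : V → V a linear automorphism, and c_0, c_1, …, c_{d−1} ∈ ℂ with c_0 ≠ 0. Then the linear map L_n := q^{nd} A^d + c_{d−1} q^{n(d−1)} A^{d−1} + ⋯ + c_1 q^n A + c_0·id is invertible for all but finitely many n ∈ ℤ. -/
/-!
Writing `t = q ^ n`, the map is `∑_{i ≤ d} t ^ i • B i` with `B 0 = c 0 • id` invertible.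
Its determinant is a polynomial in `t` which does not vanish at `t = 0`, so it has only finitely
many roots; and `n ↦ q ^ n` is injective because `‖q‖ ∉ {0, 1}`.
-/

open Polynomial Finset

section PolynomialFamily

variable {K V : Type*} [Field K] [AddCommGroup V] [Module K V] [FiniteDimensional K V]

theorem LinearMap.exists_eval_eq_det_sum_pow_smul (B : ℕ → Module.End K V) (s : Finset ℕ) :
    ∃ p : K[X], ∀ t : K, p.eval t = LinearMap.det (∑ i ∈ s, t ^ i • B i) := by
  classical
  let b := Module.finBasis K V
  refine ⟨(∑ i ∈ s, (X ^ i : K[X]) • (LinearMap.toMatrix b b (B i)).map C).det, fun t => ?_⟩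
  rw [← LinearMap.det_toMatrix b, ← coe_evalRingHom, RingHom.map_det]
  congr 1
  ext j k
  simp [Matrix.sum_apply, mul_comm (t ^ _)]

theorem Module.End.finite_setOf_not_isUnit_sum_pow_smul (B : ℕ → Module.End K V) (N : ℕ)
    (hB : IsUnit (B 0)) : {t : K | ¬ IsUnit (∑ i ∈ range (N + 1), t ^ i • B i)}.Finite := by
  obtain ⟨p, hp⟩ := LinearMap.exists_eval_eq_det_sum_pow_smul B (range (N + 1))
  have hp0 : p.eval 0 ≠ 0 := by
    rw [hp, sum_range_succ', sum_eq_zero (fun i _ => by simp), zero_add, pow_zero, one_smul]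
    exact ((LinearMap.isUnit_iff_isUnit_det _).1 hB).ne_zero
  refine (p.finite_setOfPred_isRoot fun h => hp0 (by simp [h])).subset fun t ht => ?_
  contrapose! ht
  simpa [hp, LinearMap.isUnit_iff_isUnit_det] using ht

end PolynomialFamily

theorem zpow_right_injective_of_norm {𝕜 : Type*} [NormedDivisionRing 𝕜] {q : 𝕜}
    (h0 : 0 < ‖q‖) (h1 : ‖q‖ ≠ 1) : Function.Injective (q ^ · : ℤ → 𝕜) :=
  fun m n h => zpow_right_injective₀ h0 h1 <| by simpa only [norm_zpow] using congrArg norm h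

theorem stmt6_general (V : Type*) [NormedAddCommGroup V] [NormedSpace ℂ V]
    [FiniteDimensional ℂ V]
    (q : ℂ) (hq0 : 0 < ‖q‖) (hq1 : ‖q‖ < 1)
    (d : ℕ) (hd : 1 ≤ d) (A : V ≃ₗ[ℂ] V) (c : ℕ → ℂ) (hc0 : c 0 ≠ 0) :
    {n : ℤ | ¬ Function.Bijective (fun v : V =>
        q ^ (n * (d : ℤ)) • (A.toLinearMap ^ d) v +
        ∑ i ∈ Finset.range d, (c i * q ^ (n * (i : ℤ))) • (A.toLinearMap ^ i) v)}.Finite := by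
  let B : ℕ → Module.End ℂ V := fun i => Function.update c d 1 i • A.toLinearMap ^ i
  have hB0 : IsUnit (B 0) := by
    simpa [B, Function.update_of_ne (by omega : 0 ≠ d), Algebra.algebraMap_eq_smul_one]
      using hc0.isUnit.map (algebraMap ℂ (Module.End ℂ V))
  have hL (n : ℤ) : (fun v : V => q ^ (n * (d : ℤ)) • (A.toLinearMap ^ d) v +
      ∑ i ∈ range d, (c i * q ^ (n * (i : ℤ))) • (A.toLinearMap ^ i) v) =
      ⇑(∑ i ∈ range (d + 1), (q ^ n) ^ i • B i) := by
    ext v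
    simp only [sum_range_succ _ d, Function.update_self, LinearMap.add_apply,
      LinearMap.sum_apply, LinearMap.smul_apply, smul_smul, mul_one, ← zpow_natCast, ← zpow_mul, B]
    rw [add_comm]
    congr 1
    refine sum_congr rfl fun i hi => ?_
    rw [Function.update_of_ne (mem_range.1 hi).ne, mul_comm]
  refine ((Module.End.finite_setOf_not_isUnit_sum_pow_smul B d hB0).preimage
    (zpow_right_injective_of_norm hq0 hq1.ne).injOn).subset fun n hn => ?_
  simpa [hL, Module.End.isUnit_iff] using hn

theorem stmt6 (V : Type*) [NormedAddCommGroup V] [NormedSpace ℂ V]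
    [FiniteDimensional ℂ V] [Nontrivial V]
    (q : ℂ) (hq0 : 0 < ‖q‖) (hq1 : ‖q‖ < 1)
    (d : ℕ) (hd : 1 ≤ d) (A : V ≃ₗ[ℂ] V) (c : ℕ → ℂ) (hc0 : c 0 ≠ 0) :
    {n : ℤ | ¬ Function.Bijective (fun v : V =>
        q ^ (n * (d : ℤ)) • (A.toLinearMap ^ d) v +
        ∑ i ∈ Finset.range d, (c i * q ^ (n * (i : ℤ))) • (A.toLinearMap ^ i) v)}.Finite :=
  stmt6_general V q hq0 hq1 d hd A c hc0
end

section
/- Let q ∈ ℂ with 0 < |q| < 1 and let b : ℤ → ℂ be a finitely supported function. There exists a finitely supported function a : ℤ → ℂ satisfying a(n+1)·q^{n+1} − a(n) = b(n) for all n ∈ ℤ if and only if ∑_{n ∈ ℤ} b(n)·q^{n(n+1)/2} = 0. Moreover, if it exists, the solution a is unique. -/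
/-!
The weight `w n = q ^ (n * (n + 1) / 2)` satisfies `w (n + 1) = w n * q ^ (n + 1)`, so for
`f = a * w` the recurrence becomes the telescoping equation `f (n + 1) - f n = b n * w n`.
A finitely supported solution of `f (n + 1) - f n = c n` exists iff `∑ c = 0` (take
`f n = ∑_{m < n} c m`), and it is unique since a finitely supported function with vanishing
differences is zero. As `q ≠ 0`, multiplication by `w` preserves supports.
-/

open Function Set

section DifferenceEquation

variable {M : Type*} [AddCommGroup M]

theorem finsum_sub_shift_eq_zero {f : ℤ → M} (hf : (support f).Finite) :
    ∑ᶠ n, (f (n + 1) - f n) = 0 := by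
  have hshift : (support fun n => f (n + 1)).Finite :=
    hf.preimage (add_left_injective 1).injOn
  have hcomp : ∑ᶠ n, f (n + 1) = ∑ᶠ n, f n := finsum_comp_equiv (Equiv.addRight 1)
  rw [finsum_sub_distrib hshift hf, hcomp, sub_self]

theorem exists_sub_shift_eq_of_finsum_eq_zero {c : ℤ → M} (hc : (support c).Finite)
    (hsum : ∑ᶠ n, c n = 0) :
    ∃ f : ℤ → M, (support f).Finite ∧ ∀ n, f (n + 1) - f n = c n := by
  obtain ⟨L, hL⟩ := hc.bddBelow
  obtain ⟨U, hU⟩ := hc.bddAbove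
  refine ⟨fun n => ∑ᶠ m ∈ Iio n, c m, (finite_Ioc L U).subset fun n hn => ?_, fun n => ?_⟩
  · constructor
    · by_contra! hnL
      refine hn (finsum_mem_eq_zero_of_forall_eq_zero fun m hm => ?_)
      by_contra hcm
      exact absurd (hL hcm) (not_le.mpr ((mem_Iio.mp hm).trans_le hnL))
    · by_contra! hUn
      refine hn ((finsum_mem_inter_support_eq' c _ univ fun m hm => ?_).trans
        ((finsum_mem_univ c).trans hsum))
      simpa using (hU hm).trans_lt hUn
  · dsimp only
    rw [Iio_add_one_eq_Iic, ← Iio_insert,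
      finsum_mem_insert' (s := Iio n) c (lt_irrefl n) (hc.subset inter_subset_right),
      add_sub_cancel_right]

theorem eq_zero_of_finite_support_of_add_one_eq {f : ℤ → M} (hf : (support f).Finite)
    (h : ∀ n, f (n + 1) = f n) : f = 0 := by
  have hconst : ∀ n, f n = f 0 := fun n =>
    Int.induction_on n rfl (fun k hk => (h k).trans hk) fun k hk => (h (-k - 1)).symm.trans <| by
      simpa using hk
  by_contra hne
  have hf0 : f 0 ≠ 0 := fun h0 => hne (funext fun n => (hconst n).trans h0)
  exact infinite_univ (hf.subset fun n _ => (hconst n).trans_ne hf0 |> mem_support.mpr)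

theorem exists_sub_shift_eq_iff {c : ℤ → M} (hc : (support c).Finite) :
    (∃ f : ℤ → M, (support f).Finite ∧ ∀ n, f (n + 1) - f n = c n) ↔ ∑ᶠ n, c n = 0 :=
  ⟨fun ⟨_, hf, h⟩ => by simpa only [h] using finsum_sub_shift_eq_zero hf,
    exists_sub_shift_eq_of_finsum_eq_zero hc⟩

theorem eq_of_sub_shift_eq {f g : ℤ → M} (hf : (support f).Finite) (hg : (support g).Finite)
    (h : ∀ n, f (n + 1) - f n = g (n + 1) - g n) : f = g := by
  refine sub_eq_zero.mp (eq_zero_of_finite_support_of_add_one_eq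
    ((hf.union hg).subset (support_sub f g)) fun n => ?_)
  rw [Pi.sub_apply, Pi.sub_apply, sub_eq_sub_iff_sub_eq_sub, h n]

end DifferenceEquation

theorem triangle_succ (n : ℤ) : (n + 1) * (n + 1 + 1) / 2 = n * (n + 1) / 2 + (n + 1) := by
  rw [← Int.add_mul_ediv_right _ _ two_ne_zero]
  ring_nf

theorem weighted_sub_eq_iff {K : Type*} [Field K] {w r : ℤ → K}
    (hw : ∀ n, w (n + 1) = w n * r n) {n : ℤ} (hwn : w n ≠ 0) (a b : ℤ → K) :
    (a * w) (n + 1) - (a * w) n = (b * w) n ↔ a (n + 1) * r n - a n = b n := by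
  simp only [Pi.mul_apply]
  rw [hw, show a (n + 1) * (w n * r n) - a n * w n = (a (n + 1) * r n - a n) * w n by ring,
    mul_left_inj' hwn]

theorem stmt9_general (q : ℂ) (hq0 : 0 < ‖q‖)
    (b : ℤ → ℂ) (hb : (Function.support b).Finite) :
    ((∃ a : ℤ → ℂ, (Function.support a).Finite ∧
        ∀ n : ℤ, a (n + 1) * q ^ (n + 1) - a n = b n) ↔
      ∑ᶠ n : ℤ, b n * q ^ (n * (n + 1) / 2) = 0) ∧
    (∀ a₁ a₂ : ℤ → ℂ, (Function.support a₁).Finite → (Function.support a₂).Finite →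
      (∀ n : ℤ, a₁ (n + 1) * q ^ (n + 1) - a₁ n = b n) →
      (∀ n : ℤ, a₂ (n + 1) * q ^ (n + 1) - a₂ n = b n) → a₁ = a₂) := by
  have hq : q ≠ 0 := norm_pos_iff.mp hq0
  set w : ℤ → ℂ := fun n => q ^ (n * (n + 1) / 2)
  have hw0 : ∀ n, w n ≠ 0 := fun n => zpow_ne_zero _ hq
  have hw : ∀ n, w (n + 1) = w n * q ^ (n + 1) := fun n => by
    simp only [w, triangle_succ, zpow_add₀ hq]
  have hrec : ∀ a : ℤ → ℂ, (∀ n, a (n + 1) * q ^ (n + 1) - a n = b n) ↔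
      ∀ n, (a * w) (n + 1) - (a * w) n = (b * w) n := fun a =>
    forall_congr' fun n => (weighted_sub_eq_iff hw (hw0 n) a b).symm
  have hsupp : ∀ a : ℤ → ℂ, support (a * w) = support a := fun a =>
    support_mul_of_ne_zero_right a hw0
  refine ⟨?_, fun a₁ a₂ h₁ h₂ hr₁ hr₂ => ?_⟩
  · rw [show (∑ᶠ n, b n * w n) = ∑ᶠ n, (b * w) n from rfl,
      ← exists_sub_shift_eq_iff ((hsupp b).symm ▸ hb)]
    refine ⟨fun ⟨a, ha, h⟩ => ⟨a * w, (hsupp a).symm ▸ ha, (hrec a).mp h⟩, fun ⟨f, hf, h⟩ => ?_⟩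
    have hfw : f / w * w = f := funext fun n => div_mul_cancel₀ (f n) (hw0 n)
    exact ⟨f / w, hsupp (f / w) ▸ hfw.symm ▸ hf, (hrec _).mpr (hfw.symm ▸ h)⟩
  · have hw_eq : a₁ * w = a₂ * w := eq_of_sub_shift_eq ((hsupp a₁).symm ▸ h₁)
      ((hsupp a₂).symm ▸ h₂) fun n => ((hrec a₁).mp hr₁ n).trans ((hrec a₂).mp hr₂ n).symm
    exact funext fun n => mul_right_cancel₀ (hw0 n) (congrFun hw_eq n)

theorem stmt9 (q : ℂ) (hq0 : 0 < ‖q‖) (hq1 : ‖q‖ < 1)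
    (b : ℤ → ℂ) (hb : (Function.support b).Finite) :
    ((∃ a : ℤ → ℂ, (Function.support a).Finite ∧
        ∀ n : ℤ, a (n + 1) * q ^ (n + 1) - a n = b n) ↔
      ∑ᶠ n : ℤ, b n * q ^ (n * (n + 1) / 2) = 0) ∧
    (∀ a₁ a₂ : ℤ → ℂ, (Function.support a₁).Finite → (Function.support a₂).Finite →
      (∀ n : ℤ, a₁ (n + 1) * q ^ (n + 1) - a₁ n = b n) →
      (∀ n : ℤ, a₂ (n + 1) * q ^ (n + 1) - a₂ n = b n) → a₁ = a₂) :=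
  stmt9_general q hq0 b hb
end

section
/- Let k be a field and q1 ∈ k* not a root of unity. Let φ ∈ k[[t]] be a formal power series with φ(t) = q1·t + a_2 t^2 + a_3 t^3 + ⋯ (no constant term, linear coefficient q1). Then there exists a formal power series s(t) = t + b_2 t^2 + b_3 t^3 + ⋯ ∈ k[[t]] such that s(φ(t)) = q1·s(t). Moreover such s is unique. -/
/-- Composition `s(φ(t))` of formal power series, valid when `φ` has zero constant term:
the coefficient of `t^N` is `∑_{j ≤ N} (coeff j s)·(coeff N of φ^j)`. -/
noncomputable def compPS {k : Type*} [CommRing k] (s φ : PowerSeries k) : PowerSeries k :=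
  PowerSeries.mk fun N => ∑ j ∈ Finset.range (N + 1),
    PowerSeries.coeff j s * PowerSeries.coeff N (φ ^ j)

/-!
Comparing coefficients of `tⁿ` in `s(φ(t)) = q s(t)`, where `φ = q t + O(t²)`, gives
`(q - qⁿ) bₙ = ∑_{j<n} b_j [tⁿ] φʲ`, because `[tⁿ] φʲ = 0` for `j > n` and `[tⁿ] φⁿ = qⁿ`.
Since `q` is not a root of unity, `q - qⁿ ≠ 0` for `n ≥ 2`, so once `b₀ = 0` and `b₁ = 1` are
fixed the recursion determines every `bₙ`, and defining `bₙ` by it gives a solution.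
-/

open PowerSeries

theorem pow_ne_self_of_pow_ne_one {M : Type*} [MonoidWithZero M] [IsRightCancelMulZero M]
    {q : M} (hq0 : q ≠ 0) (hq : ∀ n : ℕ, 0 < n → q ^ n ≠ 1) {n : ℕ} (hn : 2 ≤ n) : q ^ n ≠ q := by
  obtain ⟨m, rfl⟩ : ∃ m, n = m + 1 + 1 := ⟨n - 2, by omega⟩
  intro h
  rw [pow_succ] at h
  exact hq (m + 1) m.succ_pos (mul_right_cancel₀ hq0 (h.trans (one_mul q).symm))

section CommRing

variable {R : Type*} [CommRing R] {φ : R⟦X⟧}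

theorem PowerSeries.coeff_pow_of_lt (hφ : constantCoeff φ = 0) {n j : ℕ} (h : n < j) :
    coeff n (φ ^ j) = 0 :=
  coeff_of_lt_order n ((Nat.cast_lt.mpr h).trans_le (le_order_pow_of_constantCoeff_eq_zero j hφ))

theorem PowerSeries.coeff_pow_self (hφ : constantCoeff φ = 0) (n : ℕ) :
    coeff n (φ ^ n) = coeff 1 φ ^ n := by
  obtain ⟨ψ, rfl⟩ := X_dvd_iff.mpr hφ
  simpa [mul_pow] using coeff_X_pow_mul (ψ ^ n) n 0

theorem coeff_compPS (hφ : constantCoeff φ = 0) (s : R⟦X⟧) (n : ℕ) :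
    coeff n (compPS s φ) =
      ∑ j ∈ Finset.range n, coeff j s * coeff n (φ ^ j) + coeff n s * coeff 1 φ ^ n := by
  rw [compPS, coeff_mk, Finset.sum_range_succ, coeff_pow_self hφ]

theorem compPS_eq_smul_iff (hφ : constantCoeff φ = 0) {q : R} (hφ1 : coeff 1 φ = q)
    (s : R⟦X⟧) :
    compPS s φ = q • s ↔
      ∀ n, (q - q ^ n) * coeff n s = ∑ j ∈ Finset.range n, coeff j s * coeff n (φ ^ j) := by
  rw [PowerSeries.ext_iff]
  refine forall_congr' fun n => ?_
  rw [coeff_compPS hφ, hφ1, coeff_smul, smul_eq_mul]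
  constructor <;> intro h <;> linear_combination -h

end CommRing

section Field

variable {K : Type*} [Field K]

noncomputable def koenigsCoeff (q : K) (φ : K⟦X⟧) : ℕ → K
  | 0 => 0
  | 1 => 1
  | n + 2 => (q - q ^ (n + 2))⁻¹ *
      ∑ j : Fin (n + 2), koenigsCoeff q φ j * coeff (n + 2) (φ ^ (j : ℕ))

theorem koenigsCoeff_add_two (q : K) (φ : K⟦X⟧) (n : ℕ) :
    koenigsCoeff q φ (n + 2) = (q - q ^ (n + 2))⁻¹ *
      ∑ j ∈ Finset.range (n + 2), koenigsCoeff q φ j * coeff (n + 2) (φ ^ j) := by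
  rw [koenigsCoeff,
    Fin.sum_univ_eq_sum_range (fun j => koenigsCoeff q φ j * coeff (n + 2) (φ ^ j))]

noncomputable def koenigsSeries (q : K) (φ : K⟦X⟧) : K⟦X⟧ :=
  mk (koenigsCoeff q φ)

@[simp]
theorem coeff_zero_koenigsSeries (q : K) (φ : K⟦X⟧) : coeff 0 (koenigsSeries q φ) = 0 := by
  simp [koenigsSeries, koenigsCoeff]

@[simp]
theorem coeff_one_koenigsSeries (q : K) (φ : K⟦X⟧) : coeff 1 (koenigsSeries q φ) = 1 := by
  simp [koenigsSeries, koenigsCoeff]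

variable {q : K} {φ : K⟦X⟧}

theorem compPS_koenigsSeries (hφ : constantCoeff φ = 0) (hφ1 : coeff 1 φ = q)
    (hq : ∀ n, 2 ≤ n → q ^ n ≠ q) :
    compPS (koenigsSeries q φ) φ = q • koenigsSeries q φ := by
  rw [compPS_eq_smul_iff hφ hφ1]
  rintro (_ | _ | n)
  · simp
  · simp
  · have hne : q - q ^ (n + 2) ≠ 0 := sub_ne_zero.mpr (hq (n + 2) (by omega)).symm
    simp only [koenigsSeries, coeff_mk]
    rw [koenigsCoeff_add_two, ← mul_assoc, mul_inv_cancel₀ hne, one_mul]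

theorem eq_of_compPS_eq_smul (hφ : constantCoeff φ = 0) (hφ1 : coeff 1 φ = q)
    (hq : ∀ n, 2 ≤ n → q ^ n ≠ q) {s t : K⟦X⟧} (hs : compPS s φ = q • s)
    (ht : compPS t φ = q • t) (h0 : coeff 0 s = coeff 0 t) (h1 : coeff 1 s = coeff 1 t) :
    s = t := by
  rw [compPS_eq_smul_iff hφ hφ1] at hs ht
  ext n
  induction n using Nat.strong_induction_on with
  | _ n ih =>
    match n with
    | 0 => exact h0
    | 1 => exact h1
    | n + 2 =>
      have hne : q - q ^ (n + 2) ≠ 0 := sub_ne_zero.mpr (hq (n + 2) (by omega)).symm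
      refine mul_left_cancel₀ hne ?_
      rw [hs, ht]
      exact Finset.sum_congr rfl fun j hj => by rw [ih j (Finset.mem_range.mp hj)]

end Field

theorem stmt16 (k : Type*) [Field k] (q1 : k) (hq0 : q1 ≠ 0)
    (hq : ∀ n : ℕ, 0 < n → q1 ^ n ≠ 1)
    (φ : PowerSeries k) (hφ0 : PowerSeries.coeff 0 φ = 0)
    (hφ1 : PowerSeries.coeff 1 φ = q1) :
    ∃! s : PowerSeries k, PowerSeries.coeff 0 s = 0 ∧ PowerSeries.coeff 1 s = 1 ∧
      compPS s φ = q1 • s := by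
  have hφ : constantCoeff φ = 0 := by rwa [← coeff_zero_eq_constantCoeff_apply]
  have hq' : ∀ n, 2 ≤ n → q1 ^ n ≠ q1 := fun n hn => pow_ne_self_of_pow_ne_one hq0 hq hn
  have hsol := compPS_koenigsSeries hφ hφ1 hq'
  refine ⟨koenigsSeries q1 φ,
    ⟨coeff_zero_koenigsSeries q1 φ, coeff_one_koenigsSeries q1 φ, hsol⟩, ?_⟩
  rintro s ⟨hs0, hs1, hs⟩
  exact eq_of_compPS_eq_smul hφ hφ1 hq' hs hsol (by simp [hs0]) (by simp [hs1])
end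

section
/- Let q ∈ ℂ with 0 < |q| < 1, let W be a nonzero finite-dimensional complex vector space, A ∈ GL(W), d ∈ ℂ*, and t, n ≥ 1 integers. Consider the space S of finitely supported functions x : ℤ → W and the ℂ-linear operator T : S → S defined by (T x)(k) = q^{(k+t)/n}·A(x(k+t)) − x(k), where q^{1/n} is a fixed n-th root of q. Then T is injective and its cokernel has dimension t·dim W; explicitly, a finitely supported w : ℤ → W lies in the image of T if and only if for every k_0 ∈ {0, 1, …, t−1}, ∑_{s ∈ ℤ} q^{m(k_0,s)}·A^s(w(k_0 + s t)) = 0, where m(k_0, s) = s k_0/n + s(s+1)t/(2n) and q^{m} := (q^{1/n})^{nm}... i.e. q raised to the rational power m via the fixed root. -/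
/-!
Split `ℤ` into the residue classes `k₀ + tℤ`, `0 ≤ k₀ < t`. On the class of `k₀` the rescaling
`y s = q ^ m(k₀, s) • A ^ s (x (k₀ + s t))` conjugates `T` into the difference operator
`y ↦ y (· + 1) - y`, because `m(k₀, s + 1) - m(k₀, s) = (k₀ + (s + 1) t) / n`. On finitely
supported sequences the difference operator is injective and, inverted by partial sums, has as
image exactly the sequences of sum zero. So `T` is injective and its image is cut out by `t`
independent `W`-valued conditions, one vanishing sum per residue class.
-/

open Function

section Difference

variable {W : Type*} [AddCommGroup W]

theorem finsum_sub_shift_eq_zero_s18 {y : ℤ → W} (hy : y.support.Finite) :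
    ∑ᶠ s, (y (s + 1) - y s) = 0 := by
  have hy' : (fun s => y (s + 1)).support.Finite := hy.preimage (add_left_injective 1).injOn
  rw [finsum_sub_distrib hy' hy]
  exact sub_eq_zero.2 (finsum_comp_equiv (Equiv.addRight 1))

theorem eq_zero_of_sub_shift_eq_zero {y : ℤ → W} (hy : y.support.Finite)
    (h : ∀ s, y (s + 1) - y s = 0) : y = 0 := by
  have hconst : ∀ s, y s = y 0 := by
    intro s
    induction s using Int.induction_on with
    | zero => rfl
    | succ s ih => rw [← ih, ← sub_eq_zero, h]
    | pred s ih => rw [← ih, ← sub_eq_zero, ← neg_eq_zero, neg_sub, ← h, sub_add_cancel]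
  by_contra hne
  have hy0 : y 0 ≠ 0 := fun h0 => hne (funext fun s => (hconst s).trans h0)
  refine Set.infinite_univ (hy.subset fun s _ => ?_)
  rw [mem_support, hconst]
  exact hy0

noncomputable def partialSum (w : ℤ → W) (s : ℤ) : W := ∑ᶠ r ∈ Set.Iio s, w r

theorem partialSum_add_one_sub {w : ℤ → W} (hw : w.support.Finite) (s : ℤ) :
    partialSum w (s + 1) - partialSum w s = w s := by
  rw [partialSum, partialSum, Set.Iio_add_one_eq_Iic, ← Set.Iio_insert,
    finsum_mem_insert' _ Set.self_notMem_Iio (hw.subset Set.inter_subset_right),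
    add_sub_cancel_right]

theorem partialSum_support_finite {w : ℤ → W} (hw : w.support.Finite) (hsum : ∑ᶠ r, w r = 0) :
    (partialSum w).support.Finite := by
  obtain ⟨a, ha⟩ := hw.bddBelow
  obtain ⟨b, hb⟩ := hw.bddAbove
  refine (Set.finite_Ioc a b).subset fun s hs => ?_
  by_contra hab
  apply hs
  rcases not_and_or.1 hab with has | hsb
  · exact finsum_mem_eq_zero_of_forall_eq_zero fun r hr =>
      notMem_support.1 fun hr' => has ((ha hr').trans_lt hr)
  · rw [partialSum, ← hsum]
    refine (finsum_mem_inter_support_eq' w _ Set.univ fun r hr => ?_).trans (finsum_mem_univ w)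
    exact iff_of_true ((hb hr).trans_lt (not_le.1 hsb)) trivial

end Difference

/-- The exponent `n · m(k₀, s)` of `q ^ (1 / n)`; `s * (s + 1)` is even, so the division is
exact. -/
def weight (t k₀ s : ℤ) : ℤ := s * k₀ + s * (s + 1) * t / 2

theorem weight_add_one (t k₀ s : ℤ) :
    weight t k₀ (s + 1) = weight t k₀ s + (k₀ + (s + 1) * t) := by
  rw [weight, weight, show (s + 1) * (s + 1 + 1) * t = s * (s + 1) * t + (s + 1) * t * 2 by ring,
    Int.add_mul_ediv_right _ _ two_ne_zero]
  ring

section Twist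

variable {K W : Type*} [Field K] [AddCommGroup W] [Module K W]

theorem zpow_smul_zpow_apply_neg {c : K} (hc : c ≠ 0) (A : W ≃ₗ[K] W) (m n : ℤ) (y : W) :
    c ^ m • (A ^ n) (c ^ (-m) • (A ^ (-n)) y) = y := by
  rw [map_smul, smul_smul, ← zpow_add₀ hc, add_neg_cancel, zpow_zero, one_smul,
    ← LinearEquiv.mul_apply, ← zpow_add, add_neg_cancel, zpow_zero]
  rfl

/-- The coefficient form of `Φ - 1`, where `x k` is the coefficient of `z ^ (k / n)` and
`c` is the chosen root `q ^ (1 / n)`. -/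
def phiSubOne (c : K) (A : W ≃ₗ[K] W) (t : ℤ) (x : ℤ → W) (k : ℤ) : W :=
  c ^ (k + t) • A (x (k + t)) - x k

def twist (c : K) (A : W ≃ₗ[K] W) (t : ℤ) (x : ℤ → W) (k₀ s : ℤ) : W :=
  c ^ weight t k₀ s • (A ^ s) (x (k₀ + s * t))

def untwist (c : K) (A : W ≃ₗ[K] W) (t : ℤ) (y : ℤ → ℤ → W) (k : ℤ) : W :=
  c ^ (-weight t (k % t) (k / t)) • (A ^ (-(k / t))) (y (k % t) (k / t))

variable {c : K} {A : W ≃ₗ[K] W} {t : ℤ}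

theorem twist_phiSubOne (hc : c ≠ 0) (x : ℤ → W) (k₀ s : ℤ) :
    twist c A t (phiSubOne c A t x) k₀ s = twist c A t x k₀ (s + 1) - twist c A t x k₀ s := by
  rw [twist, twist, twist, phiSubOne, weight_add_one,
    show k₀ + s * t + t = k₀ + (s + 1) * t by ring, map_sub, map_smul, smul_sub, smul_smul,
    ← zpow_add₀ hc, zpow_add_one, LinearEquiv.mul_apply]

theorem untwist_twist (hc : c ≠ 0) (x : ℤ → W) : untwist c A t (twist c A t x) = x := by
  funext k
  rw [untwist, twist, Int.emod_add_ediv_mul]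
  simpa only [neg_neg] using
    zpow_smul_zpow_apply_neg hc A (-weight t (k % t) (k / t)) (-(k / t)) (x k)

theorem twist_untwist (hc : c ≠ 0) (ht : 0 < t) (y : ℤ → ℤ → W) {k₀ : ℤ} (h₀ : 0 ≤ k₀)
    (h₁ : k₀ < t) (s : ℤ) :
    twist c A t (untwist c A t y) k₀ s = y k₀ s := by
  have hmod : (k₀ + s * t) % t = k₀ := by rw [Int.add_mul_emod_self_right, Int.emod_eq_of_lt h₀ h₁]
  have hdiv : (k₀ + s * t) / t = s := by
    rw [Int.add_mul_ediv_right _ _ ht.ne', Int.ediv_eq_zero_of_lt h₀ h₁, zero_add]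
  rw [twist, untwist, hmod, hdiv, zpow_smul_zpow_apply_neg hc]

theorem twist_zero : twist c A t 0 = 0 := by
  funext k₀ s
  rw [twist, Pi.zero_apply, map_zero, smul_zero, Pi.zero_apply, Pi.zero_apply]

theorem twist_support_finite (ht : t ≠ 0) {x : ℤ → W} (hx : x.support.Finite) (k₀ : ℤ) :
    (twist c A t x k₀).support.Finite := by
  have hinj : Injective fun s : ℤ => k₀ + s * t := fun a b hab =>
    mul_right_cancel₀ ht (add_left_cancel hab)
  exact (hx.preimage hinj.injOn).subset fun s hs h₀ => hs (by rw [twist, h₀, map_zero, smul_zero])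

theorem untwist_support_finite (ht : 0 < t) {y : ℤ → ℤ → W}
    (hy : ∀ k₀, 0 ≤ k₀ → k₀ < t → (y k₀).support.Finite) : (untwist c A t y).support.Finite := by
  refine ((Set.finite_Ico 0 t).biUnion fun k₀ hk₀ =>
    (hy k₀ hk₀.1 hk₀.2).image fun s => k₀ + s * t).subset fun k hk => ?_
  refine Set.mem_iUnion₂.2 ⟨k % t, ⟨Int.emod_nonneg k ht.ne', Int.emod_lt_of_pos k ht⟩, k / t,
    fun h₀ => hk ?_, Int.emod_add_ediv_mul k t⟩
  rw [untwist, h₀, map_zero, smul_zero]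

theorem eq_of_twist_eq (hc : c ≠ 0) (ht : 0 < t) {u v : ℤ → W}
    (h : ∀ k₀, 0 ≤ k₀ → k₀ < t → twist c A t u k₀ = twist c A t v k₀) : u = v := by
  rw [← untwist_twist hc u, ← untwist_twist hc v]
  funext k
  rw [untwist, untwist, h _ (Int.emod_nonneg k ht.ne') (Int.emod_lt_of_pos k ht)]

theorem eq_zero_of_phiSubOne_eq_zero (hc : c ≠ 0) (ht : 0 < t) {x : ℤ → W}
    (hx : x.support.Finite) (h : phiSubOne c A t x = 0) : x = 0 := by
  refine eq_of_twist_eq (A := A) hc ht fun k₀ _ _ => ?_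
  rw [twist_zero, Pi.zero_apply]
  refine eq_zero_of_sub_shift_eq_zero (twist_support_finite ht.ne' hx k₀) fun s => ?_
  rw [← twist_phiSubOne hc, h, twist_zero, Pi.zero_apply, Pi.zero_apply]

theorem finsum_twist_phiSubOne (hc : c ≠ 0) (ht : t ≠ 0) {x : ℤ → W} (hx : x.support.Finite)
    (k₀ : ℤ) : ∑ᶠ s, twist c A t (phiSubOne c A t x) k₀ s = 0 := by
  simp_rw [twist_phiSubOne hc]
  exact finsum_sub_shift_eq_zero_s18 (twist_support_finite ht hx k₀)

theorem exists_phiSubOne_eq (hc : c ≠ 0) (ht : 0 < t) {w : ℤ → W} (hw : w.support.Finite)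
    (hsum : ∀ k₀, 0 ≤ k₀ → k₀ < t → ∑ᶠ s, twist c A t w k₀ s = 0) :
    ∃ x : ℤ → W, x.support.Finite ∧ phiSubOne c A t x = w := by
  have hw' := twist_support_finite (A := A) (c := c) ht.ne' hw
  refine ⟨untwist c A t fun k₀ => partialSum (twist c A t w k₀),
    untwist_support_finite ht fun k₀ h₀ h₁ => partialSum_support_finite (hw' k₀) (hsum k₀ h₀ h₁),
    eq_of_twist_eq (A := A) hc ht fun k₀ h₀ h₁ => funext fun s => ?_⟩
  rw [twist_phiSubOne hc, twist_untwist hc ht _ h₀ h₁, twist_untwist hc ht _ h₀ h₁,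
    partialSum_add_one_sub (hw' k₀)]

theorem exists_finsum_twist_eq (hc : c ≠ 0) (ht : 0 < t) (v : ℤ → W) :
    ∃ w : ℤ → W, w.support.Finite ∧ ∀ k₀, 0 ≤ k₀ → k₀ < t → ∑ᶠ s, twist c A t w k₀ s = v k₀ := by
  refine ⟨untwist c A t fun k₀ => Pi.single 0 (v k₀), untwist_support_finite ht fun k₀ _ _ =>
    (Set.finite_singleton 0).subset Pi.support_single_subset, fun k₀ h₀ h₁ => ?_⟩
  simp_rw [twist_untwist hc ht _ h₀ h₁]
  rw [finsum_eq_single _ 0 fun s hs => Pi.single_eq_of_ne hs _, Pi.single_eq_same]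

end Twist

theorem stmt18_general (q qn : ℂ) (hq0 : 0 < ‖q‖)
    (W : Type*) [AddCommGroup W] [Module ℂ W]
    (A : W ≃ₗ[ℂ] W) (t n : ℕ) (ht : 1 ≤ t) (hn : 1 ≤ n) (hqn : qn ^ n = q) :
    -- injectivity of T on finitely supported functions
    (∀ x : ℤ → W, (Function.support x).Finite →
      (∀ k : ℤ, qn ^ (k + (t : ℤ)) • A (x (k + (t : ℤ))) - x k = 0) → x = 0) ∧
    -- characterization of the image of T
    (∀ w : ℤ → W, (Function.support w).Finite →
      ((∃ x : ℤ → W, (Function.support x).Finite ∧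
          ∀ k : ℤ, qn ^ (k + (t : ℤ)) • A (x (k + (t : ℤ))) - x k = w k) ↔
        ∀ k0 : ℤ, 0 ≤ k0 → k0 < (t : ℤ) →
          ∑ᶠ s : ℤ, qn ^ (s * k0 + s * (s + 1) * (t : ℤ) / 2) • ((A ^ s) (w (k0 + s * t))) = 0)) ∧
    -- the conditions cut out a space of dimension t·dim W: the condition map is surjective
    (∀ v : Fin t → W, ∃ w : ℤ → W, (Function.support w).Finite ∧
      ∀ k0 : Fin t,
        ∑ᶠ s : ℤ, qn ^ (s * (k0 : ℤ) + s * (s + 1) * (t : ℤ) / 2) •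
          ((A ^ s) (w ((k0 : ℤ) + s * t))) = v k0) := by
  have hqn0 : qn ≠ 0 := by
    rintro rfl
    exact norm_pos_iff.1 hq0 (hqn ▸ zero_pow (by omega))
  have ht₀ : (0 : ℤ) < t := by omega
  refine ⟨fun x hx h => eq_zero_of_phiSubOne_eq_zero hqn0 ht₀ hx (funext h),
    fun w hw => ⟨?_, fun hsum => ?_⟩, fun v => ?_⟩
  · rintro ⟨x, hx, hxw⟩ k₀ - -
    obtain rfl : phiSubOne qn A t x = w := funext hxw
    exact finsum_twist_phiSubOne hqn0 ht₀.ne' hx k₀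
  · obtain ⟨x, hx, rfl⟩ := exists_phiSubOne_eq hqn0 ht₀ hw hsum
    exact ⟨x, hx, fun k => rfl⟩
  · have hcast : Injective fun i : Fin t => (i : ℤ) := Nat.cast_injective.comp Fin.val_injective
    obtain ⟨w, hw, hsum⟩ :=
      exists_finsum_twist_eq (A := A) hqn0 ht₀ (extend (fun i : Fin t => (i : ℤ)) v 0)
    exact ⟨w, hw, fun k₀ => (hsum k₀ k₀.val.cast_nonneg (by exact_mod_cast k₀.isLt)).trans
      (hcast.extend_apply v 0 k₀)⟩

theorem stmt18 (q qn d : ℂ) (hq0 : 0 < ‖q‖) (hq1 : ‖q‖ < 1)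
    (hd : d ≠ 0)
    (W : Type*) [AddCommGroup W] [Module ℂ W] [FiniteDimensional ℂ W] [Nontrivial W]
    (A : W ≃ₗ[ℂ] W) (t n : ℕ) (ht : 1 ≤ t) (hn : 1 ≤ n) (hqn : qn ^ n = q) :
    -- injectivity of T on finitely supported functions
    (∀ x : ℤ → W, (Function.support x).Finite →
      (∀ k : ℤ, qn ^ (k + (t : ℤ)) • A (x (k + (t : ℤ))) - x k = 0) → x = 0) ∧
    -- characterization of the image of T
    (∀ w : ℤ → W, (Function.support w).Finite →
      ((∃ x : ℤ → W, (Function.support x).Finite ∧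
          ∀ k : ℤ, qn ^ (k + (t : ℤ)) • A (x (k + (t : ℤ))) - x k = w k) ↔
        ∀ k0 : ℤ, 0 ≤ k0 → k0 < (t : ℤ) →
          ∑ᶠ s : ℤ, qn ^ (s * k0 + s * (s + 1) * (t : ℤ) / 2) • ((A ^ s) (w (k0 + s * t))) = 0)) ∧
    -- the conditions cut out a space of dimension t·dim W: the condition map is surjective
    (∀ v : Fin t → W, ∃ w : ℤ → W, (Function.support w).Finite ∧
      ∀ k0 : Fin t,
        ∑ᶠ s : ℤ, qn ^ (s * (k0 : ℤ) + s * (s + 1) * (t : ℤ) / 2) •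
          ((A ^ s) (w ((k0 : ℤ) + s * t))) = v k0) :=
  stmt18_general q qn hq0 W A t n ht hn hqn
end
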